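/- Consider maximizing f(P, η) = aP/(b Σ_k η_k + σ²) over 0 ≤ P ≤ P_max, η_k ≥ 0, subject to constraints of the form c_k η_k ≥ γ_k (d Σ_{k'} η_{k'} + e_k P + 1) for each k (with all constants positive). If (P*, η*) is feasible with P* < P_max, then scaling to (cP*, cη*) with c = P_max/P* > 1 remains feasible and does not decrease the objective. Consequently there exists an optimal solution with P = P_max. -/
import Mathlib


/-- scaling a feasible point `(P, η)` with `P < P_max` by
`c = P_max / P > 1` keeps it feasible and does not decrease the objective
`f(P, η) = a P/(b Σ η + σ²)`; consequently, if an optimum exists, there is an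
optimum with `P = P_max`. -/
theorem stmt11 (K : ℕ) (hK : 1 ≤ K) (a b σ2 Pmax d : ℝ) (ck γk ek : Fin K → ℝ)
    (ha : 0 < a) (hb : 0 < b) (hσ : 0 < σ2) (hPmax : 0 < Pmax) (hd : 0 < d)
    (hck : ∀ k, 0 < ck k) (hγk : ∀ k, 0 < γk k) (hek : ∀ k, 0 < ek k)
    (S : Set (ℝ × (Fin K → ℝ)))
    (hS : S = {p | 0 ≤ p.1 ∧ p.1 ≤ Pmax ∧ (∀ k, 0 ≤ p.2 k) ∧
      ∀ k, ck k * p.2 k ≥ γk k * (d * (∑ k', p.2 k') + ek k * p.1 + 1)})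
    (f : ℝ × (Fin K → ℝ) → ℝ)
    (hf : f = fun p => a * p.1 / (b * (∑ k, p.2 k) + σ2))
    (P : ℝ) (η : Fin K → ℝ) (hmem : (P, η) ∈ S) (hP0 : 0 < P) (hPlt : P < Pmax) :
    (Pmax, fun k => (Pmax / P) * η k) ∈ S ∧
    f (P, η) ≤ f (Pmax, fun k => (Pmax / P) * η k) ∧
    (IsMaxOn f S (P, η) → IsMaxOn f S (Pmax, fun k => (Pmax / P) * η k)) := by
  subst hS hf
  obtain ⟨hP0', hPle, hη0, hcon⟩ := hmem
  set c : ℝ := Pmax / P with hc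
  have hc1 : 1 < c := (one_lt_div hP0).mpr hPlt
  have hc0 : 0 < c := lt_trans one_pos hc1
  have hcP : c * P = Pmax := div_mul_cancel₀ Pmax hP0.ne'
  have hsum0 : 0 ≤ ∑ k, η k := Finset.sum_nonneg fun k _ => hη0 k
  have hsum : (∑ k, c * η k) = c * ∑ k, η k := by rw [Finset.mul_sum]
  have hmem' : (Pmax, fun k => c * η k) ∈
      {p : ℝ × (Fin K → ℝ) | 0 ≤ p.1 ∧ p.1 ≤ Pmax ∧ (∀ k, 0 ≤ p.2 k) ∧
        ∀ k, ck k * p.2 k ≥ γk k * (d * (∑ k', p.2 k') + ek k * p.1 + 1)} := by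
    refine ⟨hPmax.le, le_refl _, fun k => mul_nonneg hc0.le (hη0 k), fun k => ?_⟩
    simp only
    rw [hsum]
    have h1 : γk k * (d * (c * ∑ k', η k') + ek k * Pmax + 1) ≤
        c * (γk k * (d * (∑ k', η k') + ek k * P + 1)) := by
      rw [← hcP]; nlinarith [(hγk k), (hd.le), (hek k).le]
    calc γk k * (d * (c * ∑ k', η k') + ek k * Pmax + 1)
        ≤ c * (γk k * (d * (∑ k', η k') + ek k * P + 1)) := h1
      _ ≤ c * (ck k * η k) := by
          exact mul_le_mul_of_nonneg_left (hcon k) hc0.le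
      _ = ck k * (c * η k) := by ring
  have hfle : a * P / (b * (∑ k, η k) + σ2) ≤
      a * Pmax / (b * (∑ k, c * η k) + σ2) := by
    rw [hsum, ← hcP]
    have hden1 : 0 < b * (∑ k, η k) + σ2 := by positivity
    have hden2 : 0 < b * (c * ∑ k, η k) + σ2 := by positivity
    rw [div_le_div_iff₀ hden1 hden2]
    nlinarith [mul_nonneg (mul_nonneg (mul_nonneg ha.le hP0.le) hσ.le) (sub_nonneg.mpr hc1.le)]
  refine ⟨hmem', hfle, fun hmax x hx => le_trans (hmax hx) hfle⟩
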